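/- Let V be a rank-one valuation domain with valuation v, E ⊆ V containing a sequence {x_n} that is pseudo-divergent or pseudo-stationary. Then the closed ball B(x_0, v(x_1 − x_0)) = {y ∈ V | v(y − x_0) ≥ v(x_1 − x_0)} satisfies: every f ∈ Int(E,V) maps B(x_0, v(x_1−x_0)) into V; consequently Int(E,V) ⊆ V[(X − x_0)/(x_1 − x_0)] provided Int(B(0,1),V) = V[X]. -/

import Mathlib

open Polynomial

/-- The valuation ring of a rank-one (real-valued, additive) valuation on a field `K`:
the subring of elements of nonnegative valuation. -/
noncomputable def valRing (K : Type*) [Field K] (v : AddValuation K (WithTop ℝ)) :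
    Subring K where
  carrier := {x | 0 ≤ v x}
  zero_mem' := by simp [Set.mem_setOf_eq, AddValuation.map_zero]
  one_mem' := by simp [Set.mem_setOf_eq]
  add_mem' := fun {a b} ha hb => le_trans (le_min ha hb) (v.map_add a b)
  mul_mem' := fun {a b} ha hb => by
    simp only [Set.mem_setOf_eq, v.map_mul]; exact add_nonneg ha hb
  neg_mem' := fun {a} ha => by simpa [v.map_neg] using ha

lemma mem_valRing {K : Type*} [Field K] {v : AddValuation K (WithTop ℝ)} {x : K} :
    x ∈ valRing K v ↔ 0 ≤ v x := Iff.rfl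

/-- The ring of integer-valued polynomials `Int(E,V)` for `V` the valuation ring
of `v`, as a subring of `K[X]`. -/
noncomputable def IntD (K : Type*) [Field K] (v : AddValuation K (WithTop ℝ))
    (E : Set K) : Subring (Polynomial K) :=
  ⨅ x ∈ E, (valRing K v).comap (Polynomial.evalRingHom x)

lemma mem_IntD {K : Type*} [Field K] {v : AddValuation K (WithTop ℝ)} {E : Set K}
    {f : Polynomial K} : f ∈ IntD K v E ↔ ∀ x ∈ E, 0 ≤ v (f.eval x) := by
  simp [IntD, Subring.mem_iInf, Subring.mem_comap, mem_valRing]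

lemma C_mem_IntD {K : Type*} [Field K] {v : AddValuation K (WithTop ℝ)} {E : Set K}
    {y : K} (hy : 0 ≤ v y) : Polynomial.C y ∈ IntD K v E := by
  rw [mem_IntD]; intro x hx; simpa using hy

/-!
On the sequences in question the gap `v (x n - x m)` (for `m < n`) equals `v (x n - x₀)` and
decreases weakly with `n`. Hence, for `y` in the ball `v (y - x₀) ≥ v (x₁ - x₀)`, every node gap
satisfies `v (x i - x j) ≤ v (y - x j)`. Writing `f` as its Lagrange interpolant at
`x₀, …, x_d`, the value `f y` is a sum of terms `f (x i) * ∏ (y - x j) / (x i - x j)`, each of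
which lies in `V`. The second statement follows by the affine change of variable
`X ↦ x₀ + (x₁ - x₀) X`, which maps the unit ball onto that ball.
-/

section

variable {K : Type*} [Field K] {v : AddValuation K (WithTop ℝ)} {x : ℕ → K}

def IsPseudoDivergent (v : AddValuation K (WithTop ℝ)) (x : ℕ → K) : Prop :=
  ∀ l m n : ℕ, l < m → m < n → v (x n - x m) < v (x m - x l)

def IsPseudoStationary (v : AddValuation K (WithTop ℝ)) (x : ℕ → K) : Prop :=
  ∀ l m n : ℕ, l < m → m < n → v (x n - x m) = v (x m - x l)

structure HasAntitoneGaps (v : AddValuation K (WithTop ℝ)) (x : ℕ → K) : Prop where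
  sub_eq_sub_zero : ∀ ⦃m n : ℕ⦄, m < n → v (x n - x m) = v (x n - x 0)
  sub_zero_antitone : ∀ ⦃m n : ℕ⦄, 0 < m → m ≤ n → v (x n - x 0) ≤ v (x m - x 0)

namespace IsPseudoDivergent

theorem sub_eq_sub_zero (hx : IsPseudoDivergent v x) {m n : ℕ} (hmn : m < n) :
    v (x n - x m) = v (x n - x 0) := by
  rcases Nat.eq_zero_or_pos m with rfl | hm
  · rfl
  rw [← sub_add_sub_cancel (x n) (x m) (x 0), v.map_add_eq_of_lt_left (hx 0 m n hm hmn)]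

theorem hasAntitoneGaps (hx : IsPseudoDivergent v x) : HasAntitoneGaps v x where
  sub_eq_sub_zero _ _ := hx.sub_eq_sub_zero
  sub_zero_antitone m n hm hmn := by
    rcases hmn.eq_or_lt with rfl | hmn
    · rfl
    · exact (hx.sub_eq_sub_zero hmn ▸ hx 0 m n hm hmn).le

end IsPseudoDivergent

namespace IsPseudoStationary

theorem sub_succ_eq (hx : IsPseudoStationary v x) (n : ℕ) :
    v (x (n + 1) - x n) = v (x 1 - x 0) := by
  induction n with
  | zero => rfl
  | succ n ih => rw [hx n (n + 1) (n + 2) (by omega) (by omega), ih]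

theorem sub_eq (hx : IsPseudoStationary v x) {m n : ℕ} (hmn : m < n) :
    v (x n - x m) = v (x 1 - x 0) := by
  rw [← hx m n (n + 1) hmn n.lt_succ_self, hx.sub_succ_eq]

theorem hasAntitoneGaps (hx : IsPseudoStationary v x) : HasAntitoneGaps v x where
  sub_eq_sub_zero m n hmn := by
    rw [hx.sub_eq hmn, hx.sub_eq (m.zero_le.trans_lt hmn)]
  sub_zero_antitone m n hm hmn := by
    rw [hx.sub_eq (hm.trans_le hmn), hx.sub_eq hm]

end IsPseudoStationary

namespace HasAntitoneGaps

theorem sub_le_sub_one_zero (hx : HasAntitoneGaps v x) {m n : ℕ} (hmn : m ≠ n) :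
    v (x n - x m) ≤ v (x 1 - x 0) := by
  rcases hmn.lt_or_gt with hmn | hnm
  · rw [hx.sub_eq_sub_zero hmn]
    exact hx.sub_zero_antitone one_pos (by omega)
  · rw [v.map_sub_swap, hx.sub_eq_sub_zero hnm]
    exact hx.sub_zero_antitone one_pos (by omega)

theorem sub_le_sub_zero (hx : HasAntitoneGaps v x) {m n : ℕ} (hmn : m ≠ n) :
    v (x n - x m) ≤ v (x m - x 0) := by
  rcases hmn.lt_or_gt with hmn | hnm
  · rcases Nat.eq_zero_or_pos m with rfl | hm
    · simp
    · rw [hx.sub_eq_sub_zero hmn]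
      exact hx.sub_zero_antitone hm hmn.le
  · rw [v.map_sub_swap, hx.sub_eq_sub_zero hnm]

theorem sub_le_sub_of_mem_ball (hx : HasAntitoneGaps v x) {y : K}
    (hy : v (x 1 - x 0) ≤ v (y - x 0)) {m n : ℕ} (hmn : m ≠ n) :
    v (x n - x m) ≤ v (y - x m) := by
  rw [← sub_add_sub_cancel y (x 0) (x m)]
  refine (le_min ((hx.sub_le_sub_one_zero hmn).trans hy) ?_).trans (v.map_add _ _)
  exact (hx.sub_le_sub_zero hmn).trans_eq (v.map_sub_swap _ _)

theorem injective (hx : HasAntitoneGaps v x) (h01 : x 1 ≠ x 0) : Function.Injective x := by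
  intro m n hmn
  by_contra hne
  have := hx.sub_le_sub_one_zero hne
  rw [hmn, sub_self, v.map_zero, top_le_iff, v.top_iff, sub_eq_zero] at this
  exact h01 this

end HasAntitoneGaps

theorem inv_mul_mem_valRing {a b : K} (ha : a ≠ 0) (hab : v a ≤ v b) :
    a⁻¹ * b ∈ valRing K v := by
  rw [mem_valRing]
  calc (0 : WithTop ℝ) = v (a⁻¹ * a) := by rw [inv_mul_cancel₀ ha, v.map_one]
    _ = v a⁻¹ + v a := v.map_mul _ _
    _ ≤ v a⁻¹ + v b := add_le_add_right hab _
    _ = v (a⁻¹ * b) := (v.map_mul _ _).symm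

section Lagrange

variable {ι : Type*} [DecidableEq ι] {s : Finset ι} {t : ι → K} {y : K}

theorem eval_basis_mem_valRing (hts : Set.InjOn t s) {i : ι} (hi : i ∈ s)
    (hy : ∀ j ∈ s, j ≠ i → v (t i - t j) ≤ v (y - t j)) :
    (Lagrange.basis s t i).eval y ∈ valRing K v := by
  rw [Lagrange.basis, eval_prod]
  refine Subring.prod_mem _ fun j hj => ?_
  obtain ⟨hji, hj⟩ := Finset.mem_erase.mp hj
  have hne : t i - t j ≠ 0 := sub_ne_zero.mpr fun h => hji (hts hj hi h.symm)
  simpa [Lagrange.basisDivisor] using inv_mul_mem_valRing hne (hy j hj hji)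

theorem eval_mem_valRing_of_degree_lt (hts : Set.InjOn t s) {f : K[X]} (hdeg : f.degree < s.card)
    (hf : ∀ i ∈ s, f.eval (t i) ∈ valRing K v)
    (hy : ∀ i ∈ s, ∀ j ∈ s, j ≠ i → v (t i - t j) ≤ v (y - t j)) :
    f.eval y ∈ valRing K v := by
  rw [Lagrange.eq_interpolate hts hdeg, Lagrange.interpolate_apply, eval_finsetSum]
  refine Subring.sum_mem _ fun i hi => ?_
  rw [eval_mul, eval_C]
  exact Subring.mul_mem _ (hf i hi) (eval_basis_mem_valRing hts hi (hy i hi))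

end Lagrange

theorem HasAntitoneGaps.eval_nonneg_of_mem_ball (hx : HasAntitoneGaps v x) {f : K[X]}
    (hf : ∀ n, 0 ≤ v (f.eval (x n))) {y : K} (hy : v (x 1 - x 0) ≤ v (y - x 0)) :
    0 ≤ v (f.eval y) := by
  by_cases h01 : x 1 = x 0
  · rw [h01, sub_self, v.map_zero, top_le_iff, v.top_iff, sub_eq_zero] at hy
    exact hy ▸ hf 0
  refine eval_mem_valRing_of_degree_lt (s := Finset.range (f.natDegree + 1))
    (hx.injective h01).injOn ?_ (fun i _ => hf i)
    (fun i _ j _ hji => hx.sub_le_sub_of_mem_ball hy hji)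
  rw [Finset.card_range]
  exact f.degree_le_natDegree.trans_lt (by exact_mod_cast f.natDegree.lt_succ_self)

theorem comp_affine_comp_inv (f : K[X]) {c : K} (hc : c ≠ 0) (a : K) :
    (f.comp (C c * X + C a)).comp (C c⁻¹ * (X - C a)) = f := by
  rw [comp_assoc, add_comp, mul_comp, C_comp, X_comp, C_comp, ← mul_assoc, ← C_mul,
    mul_inv_cancel₀ hc, C_1, one_mul, sub_add_cancel, comp_X]

end

theorem stmt_17_general {K : Type*} [Field K] (v : AddValuation K (WithTop ℝ))
    (E : Set K)
    (x : ℕ → K) (hxE : ∀ n, x n ∈ E)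
    -- the sequence is pseudo-divergent or pseudo-stationary
    (hseq : (∀ l m n : ℕ, l < m → m < n → v (x n - x m) < v (x m - x l)) ∨
            (∀ l m n : ℕ, l < m → m < n → v (x n - x m) = v (x m - x l))) :
    -- every `f ∈ Int(E,V)` maps the ball `B(x₀, v(x₁ - x₀))` into `V`
    (∀ f ∈ IntD K v E, ∀ y : K, 0 ≤ v y → v (x 1 - x 0) ≤ v (y - x 0) →
      0 ≤ v (f.eval y)) ∧
    -- consequently, `Int(E,V) ⊆ V[(X - x₀)/(x₁ - x₀)]` provided `Int(B(0,1),V) = V[X]`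
    (x 1 ≠ x 0 →
      (∀ f : Polynomial K,
        (∀ y : K, 0 ≤ v y → 0 ≤ v (f.eval y)) ↔ (∀ i : ℕ, 0 ≤ v (f.coeff i))) →
      ∀ f ∈ IntD K v E, ∃ g : Polynomial K, (∀ i : ℕ, 0 ≤ v (g.coeff i)) ∧
        f = g.comp (Polynomial.C (x 1 - x 0)⁻¹ * (Polynomial.X - Polynomial.C (x 0)))) := by
  have hx : HasAntitoneGaps v x :=
    hseq.elim IsPseudoDivergent.hasAntitoneGaps IsPseudoStationary.hasAntitoneGaps
  have hball : ∀ f ∈ IntD K v E, ∀ y, v (x 1 - x 0) ≤ v (y - x 0) → 0 ≤ v (f.eval y) :=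
    fun f hf _ hy => hx.eval_nonneg_of_mem_ball (fun n => mem_IntD.mp hf _ (hxE n)) hy
  refine ⟨fun f hf y _ hy => hball f hf y hy, fun h01 hInt f hf => ?_⟩
  set c := x 1 - x 0
  refine ⟨f.comp (C c * X + C (x 0)), (hInt _).mp fun y hy => ?_,
    (comp_affine_comp_inv f (sub_ne_zero.mpr h01) _).symm⟩
  rw [eval_comp]
  refine hball f hf _ ?_
  simpa [v.map_mul] using add_le_add_right hy (v c)

theorem stmt_17 {K : Type*} [Field K] (v : AddValuation K (WithTop ℝ))
    (E : Set K) (hE : ∀ x ∈ E, 0 ≤ v x)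
    (x : ℕ → K) (hxE : ∀ n, x n ∈ E)
    -- the sequence is pseudo-divergent or pseudo-stationary
    (hseq : (∀ l m n : ℕ, l < m → m < n → v (x n - x m) < v (x m - x l)) ∨
            (∀ l m n : ℕ, l < m → m < n → v (x n - x m) = v (x m - x l))) :
    -- every `f ∈ Int(E,V)` maps the ball `B(x₀, v(x₁ - x₀))` into `V`
    (∀ f ∈ IntD K v E, ∀ y : K, 0 ≤ v y → v (x 1 - x 0) ≤ v (y - x 0) →
      0 ≤ v (f.eval y)) ∧
    -- consequently, `Int(E,V) ⊆ V[(X - x₀)/(x₁ - x₀)]` provided `Int(B(0,1),V) = V[X]`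
    (x 1 ≠ x 0 →
      (∀ f : Polynomial K,
        (∀ y : K, 0 ≤ v y → 0 ≤ v (f.eval y)) ↔ (∀ i : ℕ, 0 ≤ v (f.coeff i))) →
      ∀ f ∈ IntD K v E, ∃ g : Polynomial K, (∀ i : ℕ, 0 ≤ v (g.coeff i)) ∧
        f = g.comp (Polynomial.C (x 1 - x 0)⁻¹ * (Polynomial.X - Polynomial.C (x 0)))) :=
  stmt_17_general v E x hxE hseq
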